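/- Theorem 2, equation (14) — quadratic-order equivariance error of the discretized group-convolution layer: Let S be a finite subgroup of O(2), let d ≥ 0, and for each B ∈ S fix coefficients β_B defining transformed operators χ_B^{(A)}. Let M, C, h₀ > 0, let P ⊂ ℤ² be finite, and for each A, B ∈ S and h ∈ (0, h₀] let c^{A,B}_p(h) ∈ ℝ (p ∈ P) be stencil coefficients satisfying: for every g : ℝ² → ℝ that is (d+2) times continuously differentiable with ‖D^j g(z)‖ ≤ M for all z ∈ ℝ² and j ≤ d+2, every A, B ∈ S, x ∈ ℝ², h ∈ (0, h₀], |Σ_{p∈P} c^{A,B}_p(h)·g(x + h·p) − χ_B^{(A)}[g](x)| ≤ C·h². Let e : ℝ² × S → ℝ be such that each e(·, k) is (d+2) times continuously differentiable with ‖D^j e(·,k)(z)‖ ≤ M for all z, k and j ≤ d+2. Then for every Ã, A ∈ S, every x ∈ ℝ² and every h ∈ (0, h₀], |Σ_{B∈S} Σ_{p∈P} c^{A,B}_p(h)·e(Ã⁻¹(x + h·p), Ã⁻¹AB) − Σ_{B∈S} χ_B^{(Ã⁻¹A)}[e(·, Ã⁻¹AB)](Ã⁻¹x)| ≤ |S|·C·h²,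 where |S| is the order of S. That is, the discretized layer applied to the transformed feature map π_Ã[e] agrees with the transformed continuous output π^{Ẽ}_Ã[Φ^S[e]] at (x, A) up to an error of order h². -/

import Mathlib

/-!
Each summand of the layer is treated separately. The channel `e(·, Ã⁻¹AB)` composed with the
orthogonal map `Ã⁻¹` is again `C^{d+2}` with the same derivative bounds, since precomposition with a
linear isometry preserves the norms of iterated derivatives; so the stencil estimate applies to it
with the operator `χ_B^{(A)}`. By the chain rule for a linear change of variables,
`χ^{(A)}[r ∘ N](x) = χ^{(NA)}[r](Nx)`: the directions `A eᵢ` are carried to `N A eᵢ`. This turns the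
stencil estimate into the claimed bound for the `B`-th summand, and the triangle inequality over the
`|S|` summands finishes.
-/

/-- Action of an `n × n` real matrix on `ℝⁿ` (with the Euclidean norm) by
matrix-vector multiplication. -/
noncomputable def mact {n : ℕ} (A : Matrix (Fin n) (Fin n) ℝ) :
    EuclideanSpace ℝ (Fin n) →ₗ[ℝ] EuclideanSpace ℝ (Fin n) :=
  Matrix.toEuclideanLin A

/-- The list of direction vectors `A e₁` repeated `m 1` times, ..., `A eₙ` repeated
`m n` times, as a function on `Fin (∑ i, m i)` (block `i` consists of copies of `A eᵢ`). -/
noncomputable def dirs {n : ℕ} (A : Matrix (Fin n) (Fin n) ℝ) (m : Fin n → ℕ)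
    (j : Fin (∑ i, m i)) : EuclideanSpace ℝ (Fin n) :=
  (((List.finRange n).flatMap fun i =>
      List.replicate (m i) (mact A (EuclideanSpace.single i 1)))).getD j 0

/-- The transformed differential operator
`χ^{(A)}[r](x) = ∑_{|m| ≤ d} β_m · D^{|m|} r(x)[A e₁ repeated m₁ times, …, A eₙ repeated mₙ times]`,
where multi-indices `m ∈ ℕⁿ` with `|m| ≤ d` (hence each entry `≤ d`) are encoded as
functions `Fin n → Fin (d+1)`. -/
noncomputable def chi {n d : ℕ} (β : (Fin n → Fin (d+1)) → ℝ)
    (A : Matrix (Fin n) (Fin n) ℝ)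
    (r : EuclideanSpace ℝ (Fin n) → ℝ) (x : EuclideanSpace ℝ (Fin n)) : ℝ :=
  ∑ m : Fin n → Fin (d+1),
    if (∑ i, (m i : ℕ)) ≤ d then
      β m * iteratedFDeriv ℝ (∑ i, (m i : ℕ)) r x (dirs A fun i => (m i : ℕ))
    else 0

/-- The matrix underlying an element of a subgroup `S ≤ O(2)`. -/
noncomputable def matS {S : Subgroup ↥(Matrix.orthogonalGroup (Fin 2) ℝ)}
    (A : S) : Matrix (Fin 2) (Fin 2) ℝ :=
  ((A : ↥(Matrix.orthogonalGroup (Fin 2) ℝ)) : Matrix (Fin 2) (Fin 2) ℝ)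

/-- The grid point `p ∈ ℤ²` as a point of the Euclidean plane. -/
noncomputable def gridpt (p : ℤ × ℤ) : EuclideanSpace ℝ (Fin 2) :=
  WithLp.toLp 2 ![(p.1 : ℝ), (p.2 : ℝ)]

open Matrix

section

variable {n : ℕ}

lemma mact_mul (A B : Matrix (Fin n) (Fin n) ℝ) (v : EuclideanSpace ℝ (Fin n)) :
    mact (A * B) v = mact A (mact B v) := by
  simp [mact, toLpLin_apply, mulVec_mulVec]

noncomputable def orthogonalIsometry (A : orthogonalGroup (Fin n) ℝ) :
    EuclideanSpace ℝ (Fin n) ≃ₗᵢ[ℝ] EuclideanSpace ℝ (Fin n) :=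
  Unitary.linearIsometryEquiv
    ⟨toEuclideanCLM (n := Fin n) (𝕜 := ℝ) (A : Matrix (Fin n) (Fin n) ℝ),
      Unitary.map_mem (toEuclideanCLM (n := Fin n) (𝕜 := ℝ)) A.2⟩

@[simp] lemma coe_orthogonalIsometry (A : orthogonalGroup (Fin n) ℝ) :
    ⇑(orthogonalIsometry A) = mact (A : Matrix (Fin n) (Fin n) ℝ) := rfl

lemma mact_dirs (N A : Matrix (Fin n) (Fin n) ℝ) (m : Fin n → ℕ) (j : Fin (∑ i, m i)) :
    mact N (dirs A m j) = dirs (N * A) m j := by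
  rw [dirs, dirs, ← List.getD_map (f := mact N), map_zero, List.map_flatMap]
  simp only [List.map_replicate, mact_mul]

lemma chi_comp_mact {d : ℕ} (β : (Fin n → Fin (d+1)) → ℝ) (N A : Matrix (Fin n) (Fin n) ℝ)
    {f : EuclideanSpace ℝ (Fin n) → ℝ} (hf : ContDiff ℝ d f) (x : EuclideanSpace ℝ (Fin n)) :
    chi β A (fun y => f (mact N y)) x = chi β (N * A) f (mact N x) := by
  refine Finset.sum_congr rfl fun m _ => ?_
  split_ifs with hm
  · have hcomp := (LinearMap.toContinuousLinearMap (mact N)).iteratedFDeriv_comp_right hf x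
      (i := ∑ i, (m i : ℕ)) (mod_cast hm)
    simp only [Function.comp_def, LinearMap.coe_toContinuousLinearMap'] at hcomp
    simp only [hcomp, ContinuousMultilinearMap.compContinuousLinearMap_apply,
      LinearMap.coe_toContinuousLinearMap', mact_dirs]
  · rfl

lemma abs_sum_sub_sum_le_card_mul {ι : Type*} [Fintype ι] {f g : ι → ℝ} {ε : ℝ}
    (h : ∀ i, |f i - g i| ≤ ε) : |∑ i, f i - ∑ i, g i| ≤ Fintype.card ι * ε := by
  rw [← Finset.sum_sub_distrib]
  calc |∑ i, (f i - g i)| ≤ ∑ i, |f i - g i| := Finset.abs_sum_le_sum_abs _ _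
    _ ≤ ∑ _i : ι, ε := Finset.sum_le_sum fun i _ => h i
    _ = Fintype.card ι * ε := by simp

end

theorem discretized_Phi_equivariance_error_general {d : ℕ}
    (S : Subgroup ↥(Matrix.orthogonalGroup (Fin 2) ℝ)) [Fintype S]
    (β : S → (Fin 2 → Fin (d+1)) → ℝ) (M C h₀ : ℝ)
    (P : Finset (ℤ × ℤ)) (c : S → S → ℤ × ℤ → ℝ → ℝ)
    (hcons : ∀ g : EuclideanSpace ℝ (Fin 2) → ℝ, ContDiff ℝ ((d + 2 : ℕ) : ℕ∞) g →
      (∀ z, ∀ j ≤ d + 2, ‖iteratedFDeriv ℝ j g z‖ ≤ M) →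
      ∀ A B : S, ∀ x : EuclideanSpace ℝ (Fin 2), ∀ h : ℝ, 0 < h → h ≤ h₀ →
        |(∑ p ∈ P, c A B p h * g (x + h • gridpt p)) - chi (β B) (matS A) g x|
          ≤ C * h ^ 2)
    (e : EuclideanSpace ℝ (Fin 2) → S → ℝ)
    (he : ∀ k : S, ContDiff ℝ ((d + 2 : ℕ) : ℕ∞) (fun x => e x k))
    (hbd : ∀ k : S, ∀ z, ∀ j ≤ d + 2, ‖iteratedFDeriv ℝ j (fun x => e x k) z‖ ≤ M) :
    ∀ Atil A : S, ∀ x : EuclideanSpace ℝ (Fin 2), ∀ h : ℝ, 0 < h → h ≤ h₀ →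
      |(∑ B : S, ∑ p ∈ P,
            c A B p h * e (mact (matS Atil⁻¹) (x + h • gridpt p)) (Atil⁻¹ * (A * B)))
          - ∑ B : S, chi (β B) (matS (Atil⁻¹ * A)) (fun y => e y (Atil⁻¹ * A * B))
              (mact (matS Atil⁻¹) x)|
        ≤ (Fintype.card S : ℝ) * C * h ^ 2 := by
  intro Atil A x h hh hhh₀
  rw [mul_assoc]
  refine abs_sum_sub_sum_le_card_mul fun B => ?_
  set k := Atil⁻¹ * (A * B)
  set L := orthogonalIsometry (Atil⁻¹ : S).1
  have hL : ⇑L = mact (matS Atil⁻¹) := coe_orthogonalIsometry _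
  have hsmooth : ContDiff ℝ ((d + 2 : ℕ) : ℕ∞) (fun y => e (L y) k) :=
    (he k).comp L.contDiff
  have hbounded : ∀ z, ∀ j ≤ d + 2, ‖iteratedFDeriv ℝ j (fun y => e (L y) k) z‖ ≤ M :=
    fun z j hj => by
      rw [← Function.comp_def (fun y => e y k), L.norm_iteratedFDeriv_comp_right]
      exact hbd k _ j hj
  have hchi : chi (β B) (matS A) (fun y => e (L y) k) x
      = chi (β B) (matS (Atil⁻¹ * A)) (fun y => e y (Atil⁻¹ * A * B))
          (mact (matS Atil⁻¹) x) := by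
    rw [hL, chi_comp_mact _ _ _ ((he k).of_le (by norm_cast; omega)), mul_assoc]
    -- multiplication in `S` is matrix multiplication, so `matS (Atil⁻¹ * A) = matS Atil⁻¹ * matS A`
    rfl
  rw [← hchi]
  exact hcons _ hsmooth hbounded A B x h hh hhh₀

/-- Theorem 2, equation (14): quadratic-order equivariance error of the
discretized group-convolution layer.  Assume the stencils `c^{A,B}_p(h)` (supported on
the finite set `P ⊂ ℤ²`) approximate the operators `χ_B^{(A)}` (built from the
coefficients `β B`) with error `≤ C·h²` uniformly over functions with derivatives of
order `≤ d+2` bounded by `M` and over `h ∈ (0, h₀]`.  Then for a feature map `e` whose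
channels satisfy these bounds, the discretized layer applied to `π_Ã[e]` agrees with
`π^Ẽ_Ã[Φ^S[e]](x, A) = ∑_{B∈S} χ_B^{(Ã⁻¹A)}[e(·, Ã⁻¹AB)](Ã⁻¹x)` up to `|S|·C·h²`. -/
theorem discretized_Phi_equivariance_error {d : ℕ}
    (S : Subgroup ↥(Matrix.orthogonalGroup (Fin 2) ℝ)) [Fintype S]
    (β : S → (Fin 2 → Fin (d+1)) → ℝ) (M C h₀ : ℝ) (hM : 0 < M) (hC : 0 < C)
    (hh₀ : 0 < h₀) (P : Finset (ℤ × ℤ)) (c : S → S → ℤ × ℤ → ℝ → ℝ)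
    (hcons : ∀ g : EuclideanSpace ℝ (Fin 2) → ℝ, ContDiff ℝ ((d + 2 : ℕ) : ℕ∞) g →
      (∀ z, ∀ j ≤ d + 2, ‖iteratedFDeriv ℝ j g z‖ ≤ M) →
      ∀ A B : S, ∀ x : EuclideanSpace ℝ (Fin 2), ∀ h : ℝ, 0 < h → h ≤ h₀ →
        |(∑ p ∈ P, c A B p h * g (x + h • gridpt p)) - chi (β B) (matS A) g x|
          ≤ C * h ^ 2)
    (e : EuclideanSpace ℝ (Fin 2) → S → ℝ)
    (he : ∀ k : S, ContDiff ℝ ((d + 2 : ℕ) : ℕ∞) (fun x => e x k))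
    (hbd : ∀ k : S, ∀ z, ∀ j ≤ d + 2, ‖iteratedFDeriv ℝ j (fun x => e x k) z‖ ≤ M) :
    ∀ Atil A : S, ∀ x : EuclideanSpace ℝ (Fin 2), ∀ h : ℝ, 0 < h → h ≤ h₀ →
      |(∑ B : S, ∑ p ∈ P,
            c A B p h * e (mact (matS Atil⁻¹) (x + h • gridpt p)) (Atil⁻¹ * (A * B)))
          - ∑ B : S, chi (β B) (matS (Atil⁻¹ * A)) (fun y => e y (Atil⁻¹ * A * B))
              (mact (matS Atil⁻¹) x)|
        ≤ (Fintype.card S : ℝ) * C * h ^ 2 :=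
  discretized_Phi_equivariance_error_general S β M C h₀ P c hcons e he hbd
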